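/- arXiv:1207.2886 — 2 statements merged into one kernel-verified Lean document; each statement's English description precedes it below -/
import Mathlib

section
/- (Lemma C.4, filter stability.) For all π, π̃ ∈ M_1 one has Σ_{m=0}^{q−1} ∫_{t*_m}^{t*_{m+1}} ∫_{ℝ^d} |Ψ(π,y,s) − Ψ(π̃,y,s)| · Ψ̄_m(π,y,s) dy ds ≤ 2 |π − π̃|, where |Ψ(π,y,s) − Ψ(π̃,y,s)| denotes the ℓ¹-distance in ℝ^q and the integrals are with respect to Lebesgue measure. -/
open MeasureTheory Finset

noncomputable section

namespace PDMP

/-- Integrated jump rate `Λ_i(t) = ∫_0^t λ_i(s) ds`. -/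
def Lam (lam : ℕ → ℝ → ℝ) (i : ℕ) (t : ℝ) : ℝ := ∫ s in (0:ℝ)..t, lam i s

/-- The unnormalized filter density `Ψ_m^j(π,y,s)`. -/
def psiNum (q d : ℕ) (ts : ℕ → ℝ) (lam : ℕ → ℝ → ℝ) (Q : ℕ → ℕ → ℝ → ℝ)
    (fW : (Fin d → ℝ) → ℝ) (phi : ℕ → Fin d → ℝ)
    (m : ℕ) (p : ℕ → ℝ) (y : Fin d → ℝ) (s : ℝ) (j : ℕ) : ℝ :=
  ∑ i ∈ Finset.Icc (m + 1) q,
    p i * lam i s * Real.exp (-(Lam lam i s)) * Q i j s * fW (y - phi j)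

/-- `Ψ̄_m(π,y,s) = Σ_k Ψ_m^k(π,y,s)`. -/
def psiBar (q d : ℕ) (ts : ℕ → ℝ) (lam : ℕ → ℝ → ℝ) (Q : ℕ → ℕ → ℝ → ℝ)
    (fW : (Fin d → ℝ) → ℝ) (phi : ℕ → Fin d → ℝ)
    (m : ℕ) (p : ℕ → ℝ) (y : Fin d → ℝ) (s : ℝ) : ℝ :=
  ∑ k ∈ Finset.Icc 1 q, psiNum q d ts lam Q fW phi m p y s k

open Classical in
/-- The filter update `Ψ(π,y,s)`. -/
def Psi (q d : ℕ) (ts : ℕ → ℝ) (lam : ℕ → ℝ → ℝ) (Q : ℕ → ℕ → ℝ → ℝ)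
    (fW : (Fin d → ℝ) → ℝ) (phi : ℕ → Fin d → ℝ)
    (p : ℕ → ℝ) (y : Fin d → ℝ) (s : ℝ) : ℕ → ℝ :=
  if ∃ m, 1 ≤ m ∧ m ≤ q ∧ s = ts m then
    let m := sInf {m | 1 ≤ m ∧ m ≤ q ∧ s = ts m}
    if 0 < ∑ k ∈ Finset.Icc 1 q, Q m k (ts m) * fW (y - phi k) then
      fun j => Q m j (ts m) * fW (y - phi j) /
        (∑ k ∈ Finset.Icc 1 q, Q m k (ts m) * fW (y - phi k))
    else p
  else if ∃ m, m < q ∧ ts m < s ∧ s < ts (m + 1) then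
    let m := sInf {m | m < q ∧ ts m < s ∧ s < ts (m + 1)}
    if 0 < psiBar q d ts lam Q fW phi m p y s then
      fun j => psiNum q d ts lam Q fW phi m p y s j / psiBar q d ts lam Q fW phi m p y s
    else p
  else p

/-- ℓ¹ distance on `ℝ^q` (coordinates `1,…,q`). -/
def l1 (q : ℕ) (p p' : ℕ → ℝ) : ℝ := ∑ i ∈ Finset.Icc 1 q, |p i - p' i|

/-- Membership in the probability simplex `M_1`. -/
def mem1 (q : ℕ) (p : ℕ → ℝ) : Prop :=
  (∀ i ∈ Finset.Icc 1 q, 0 ≤ p i) ∧ ∑ i ∈ Finset.Icc 1 q, p i = 1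

/-- The operator `I`. -/
def Iop (q d : ℕ) (ts : ℕ → ℝ) (lam : ℕ → ℝ → ℝ) (Q : ℕ → ℕ → ℝ → ℝ)
    (fW : (Fin d → ℝ) → ℝ) (phi : ℕ → Fin d → ℝ)
    (v : (ℕ → ℝ) → ℝ) (p : ℕ → ℝ) (u : ℝ) : ℝ :=
  ∑ i ∈ Finset.Icc 1 q, p i *
    ∫ s in (0:ℝ)..(min u (ts i)),
      lam i s * Real.exp (-(Lam lam i s)) *
        ∫ y : Fin d → ℝ,
          v (Psi q d ts lam Q fW phi p y s) *
            ∑ j ∈ Finset.Icc 1 q, Q i j s * fW (y - phi j)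

/-- Boundary (forced-jump) term appearing in the operator `G`. -/
def bTerm (q d : ℕ) (ts : ℕ → ℝ) (lam : ℕ → ℝ → ℝ) (Q : ℕ → ℕ → ℝ → ℝ)
    (fW : (Fin d → ℝ) → ℝ) (phi : ℕ → Fin d → ℝ)
    (v : (ℕ → ℝ) → ℝ) (p : ℕ → ℝ) (i : ℕ) : ℝ :=
  p i * Real.exp (-(Lam lam i (ts i))) *
    ∫ y : Fin d → ℝ,
      v (Psi q d ts lam Q fW phi p y (ts i)) *
        ∑ j ∈ Finset.Icc 1 q, Q i j (ts i) * fW (y - phi j)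

/-- The operator `G`. -/
def Gop (q d : ℕ) (ts : ℕ → ℝ) (lam : ℕ → ℝ → ℝ) (Q : ℕ → ℕ → ℝ → ℝ)
    (fW : (Fin d → ℝ) → ℝ) (phi : ℕ → Fin d → ℝ)
    (v : (ℕ → ℝ) → ℝ) (p : ℕ → ℝ) (u : ℝ) : ℝ :=
  Iop q d ts lam Q fW phi v p u +
    ∑ i ∈ Finset.Icc 1 q, if ts i ≤ u then bTerm q d ts lam Q fW phi v p i else 0

/-- The operator `H`. -/
def Hop (q : ℕ) (ts : ℕ → ℝ) (lam : ℕ → ℝ → ℝ)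
    (g : ℕ → ℝ → ℝ) (p : ℕ → ℝ) (u : ℝ) : ℝ :=
  ∑ i ∈ Finset.Icc 1 q, if u < ts i then p i * Real.exp (-(Lam lam i u)) * g i u else 0

/-- The operator `J`. -/
def Jop (q d : ℕ) (ts : ℕ → ℝ) (lam : ℕ → ℝ → ℝ) (Q : ℕ → ℕ → ℝ → ℝ)
    (fW : (Fin d → ℝ) → ℝ) (phi : ℕ → Fin d → ℝ)
    (v : (ℕ → ℝ) → ℝ) (g : ℕ → ℝ → ℝ) (p : ℕ → ℝ) (u : ℝ) : ℝ :=
  Hop q ts lam g p u + Gop q d ts lam Q fW phi v p u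

/-- The operator `K`. -/
def Kop (q d : ℕ) (ts : ℕ → ℝ) (lam : ℕ → ℝ → ℝ) (Q : ℕ → ℕ → ℝ → ℝ)
    (fW : (Fin d → ℝ) → ℝ) (phi : ℕ → Fin d → ℝ)
    (v : (ℕ → ℝ) → ℝ) (p : ℕ → ℝ) : ℝ :=
  Gop q d ts lam Q fW phi v p (ts q)

/-- The dynamic programming operator `L(v,g)(π) = sup_{u ≥ 0} J(v,g)(π,u)`. -/
def Lop (q d : ℕ) (ts : ℕ → ℝ) (lam : ℕ → ℝ → ℝ) (Q : ℕ → ℕ → ℝ → ℝ)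
    (fW : (Fin d → ℝ) → ℝ) (phi : ℕ → Fin d → ℝ)
    (v : (ℕ → ℝ) → ℝ) (g : ℕ → ℝ → ℝ) (p : ℕ → ℝ) : ℝ :=
  ⨆ u : Set.Ici (0:ℝ), Jop q d ts lam Q fW phi v g p u.1

/-- The operator `H^m`. -/
def Hm (q : ℕ) (ts : ℕ → ℝ) (lam : ℕ → ℝ → ℝ) (m : ℕ)
    (g : ℕ → ℝ → ℝ) (p : ℕ → ℝ) (u : ℝ) : ℝ :=
  if u < ts m then Hop q ts lam g p (ts m)
  else ∑ i ∈ Finset.Icc (m + 1) q,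
    p i * Real.exp (-(Lam lam i (min u (ts (m + 1))))) * g i (min u (ts (m + 1)))

/-- The operator `G^m`. -/
def Gm (q d : ℕ) (ts : ℕ → ℝ) (lam : ℕ → ℝ → ℝ) (Q : ℕ → ℕ → ℝ → ℝ)
    (fW : (Fin d → ℝ) → ℝ) (phi : ℕ → Fin d → ℝ) (m : ℕ)
    (v : (ℕ → ℝ) → ℝ) (p : ℕ → ℝ) (u : ℝ) : ℝ :=
  if u < ts m then Gop q d ts lam Q fW phi v p (ts m)
  else Iop q d ts lam Q fW phi v p (min u (ts (m + 1))) +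
    ∑ i ∈ Finset.Icc 1 m, bTerm q d ts lam Q fW phi v p i

/-- The discretization grid `Gr_m(Δ)`. -/
def grid (ts : ℕ → ℝ) (Δ : ℝ) (m : ℕ) : Set ℝ :=
  {u | (∃ i : ℕ, 1 ≤ i ∧ ts m + i * Δ ≤ ts (m + 1) - Δ ∧ u = ts m + i * Δ) ∨
    u = ts (m + 1) - Δ}

/-!
On `(t*_m, t*_{m+1})` the filter is the normalization of the nonnegative vector `Ψ_m(π, y, s)`,
which is linear in `π`. Normalizing is Lipschitz in ℓ¹ with constant `2 / mass`, so the integrand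
is at most `2 Σ_j |Ψ_m^j(π, y, s) − Ψ_m^j(π̃, y, s)| ≤ 2 Ψ̄_m(|π − π̃|, y, s)`. Integrating out `y`
(the `Q_i·` sum to one and `f_W` is a density) and summing over `m` leaves
`2 Σ_i |π^i − π̃^i| ∫_0^{t*_i} λ_i e^{−Λ_i}`, and each of these integrals is at most `1`:
`λ_i e^{−Λ_i}` is a sub-probability density, the derivative of `−e^{−Λ_i}`.
-/

section Normalize

variable {ι : Type*} {s : Finset ι}

/-- The shape of the filter update `Psi` on each open interval `(ts m, ts (m + 1))`. -/
def normalizeOr (s : Finset ι) (a r : ι → ℝ) : ι → ℝ :=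
  if 0 < ∑ k ∈ s, a k then fun j => a j / ∑ k ∈ s, a k else r

theorem eq_sum_mul_normalizeOr {a : ι → ℝ} (ha : ∀ j ∈ s, 0 ≤ a j) (r : ι → ℝ) :
    ∀ j ∈ s, a j = (∑ k ∈ s, a k) * normalizeOr s a r j := by
  intro j hj
  unfold normalizeOr
  split_ifs with h
  · field_simp
  · have hzero : ∑ k ∈ s, a k = 0 := le_antisymm (not_lt.1 h) (sum_nonneg ha)
    rw [hzero, zero_mul]
    exact (sum_eq_zero_iff_of_nonneg ha).1 hzero j hj

theorem normalizeOr_nonneg {a r : ι → ℝ} (ha : ∀ j ∈ s, 0 ≤ a j) (hr : ∀ j ∈ s, 0 ≤ r j) :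
    ∀ j ∈ s, 0 ≤ normalizeOr s a r j := by
  intro j hj
  unfold normalizeOr
  split_ifs with h
  · exact div_nonneg (ha j hj) h.le
  · exact hr j hj

theorem sum_normalizeOr {a r : ι → ℝ} (hr : ∑ j ∈ s, r j = 1) :
    ∑ j ∈ s, normalizeOr s a r j = 1 := by
  unfold normalizeOr
  split_ifs with h
  · rw [← sum_div, div_self h.ne']
  · exact hr

theorem sum_mul_sum_abs_sub_le {a b u v : ι → ℝ}
    (ha : ∀ j ∈ s, a j = (∑ k ∈ s, a k) * u j) (hb : ∀ j ∈ s, b j = (∑ k ∈ s, b k) * v j)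
    (ha0 : 0 ≤ ∑ k ∈ s, a k) (hv : ∀ j ∈ s, 0 ≤ v j) (hv1 : ∑ j ∈ s, v j = 1) :
    (∑ k ∈ s, a k) * ∑ j ∈ s, |u j - v j| ≤ 2 * ∑ j ∈ s, |a j - b j| := by
  set A := ∑ k ∈ s, a k
  set B := ∑ k ∈ s, b k
  have hBA : |B - A| ≤ ∑ j ∈ s, |a j - b j| := by
    rw [abs_sub_comm, ← sum_sub_distrib]
    exact abs_sum_le_sum_abs _ _
  have hsplit : ∀ j ∈ s, A * |u j - v j| = |(a j - b j) + (B - A) * v j| := by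
    intro j hj
    have hdecomp : A * (u j - v j) = (a j - b j) + (B - A) * v j := by
      rw [ha j hj, hb j hj]; ring
    rw [← hdecomp, abs_mul, abs_of_nonneg ha0]
  calc A * ∑ j ∈ s, |u j - v j| = ∑ j ∈ s, |(a j - b j) + (B - A) * v j| := by
        rw [mul_sum]; exact sum_congr rfl hsplit
    _ ≤ ∑ j ∈ s, (|a j - b j| + |B - A| * v j) := by
        refine sum_le_sum fun j hj => (abs_add_le _ _).trans_eq ?_
        rw [abs_mul, abs_of_nonneg (hv j hj)]
    _ = ∑ j ∈ s, |a j - b j| + |B - A| := by rw [sum_add_distrib, ← mul_sum, hv1, mul_one]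
    _ ≤ 2 * ∑ j ∈ s, |a j - b j| := by linarith

theorem sum_abs_sub_normalizeOr_mul_le {a b r r' : ι → ℝ} (ha : ∀ j ∈ s, 0 ≤ a j)
    (hb : ∀ j ∈ s, 0 ≤ b j) (hr' : ∀ j ∈ s, 0 ≤ r' j) (hr'1 : ∑ j ∈ s, r' j = 1) :
    (∑ j ∈ s, |normalizeOr s a r j - normalizeOr s b r' j|) * ∑ k ∈ s, a k ≤
      2 * ∑ j ∈ s, |a j - b j| := by
  rw [mul_comm]
  exact sum_mul_sum_abs_sub_le (eq_sum_mul_normalizeOr ha r) (eq_sum_mul_normalizeOr hb r')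
    (sum_nonneg ha) (normalizeOr_nonneg hb hr') (sum_normalizeOr hr'1)

end Normalize

section Hazard

variable {f : ℝ → ℝ} {a b : ℝ}

theorem _root_.Measurable.intervalIntegrable_of_norm_le {C : ℝ} (hf : Measurable f) (hab : a ≤ b)
    (h : ∀ x ∈ Set.Ioc a b, ‖f x‖ ≤ C) : IntervalIntegrable f volume a b := by
  refine (intervalIntegrable_const (c := C)).mono_fun' hf.aestronglyMeasurable ?_
  rw [Set.uIoc_of_le hab]
  exact (ae_restrict_iff' measurableSet_Ioc).2 (ae_of_all _ h)

theorem _root_.IntervalIntegrable.mul_exp_neg_integral (hf : IntervalIntegrable f volume a b) :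
    IntervalIntegrable (fun x => f x * Real.exp (-∫ t in a..x, f t)) volume a b :=
  hf.mul_continuousOn
    (intervalIntegral.continuousOn_primitive_interval' hf Set.left_mem_uIcc).neg.rexp

/-- By Lebesgue differentiation, `f e^{-∫f}` is a.e. the derivative of the monotone function
`-e^{-∫f}`, whose increment on `[a, b]` is at most `1`. -/
theorem integral_mul_exp_neg_integral_le_one (hab : a ≤ b) (hf : IntervalIntegrable f volume a b)
    (hf0 : ∀ x ∈ Set.Icc a b, 0 ≤ f x) :
    ∫ x in a..b, f x * Real.exp (-∫ t in a..x, f t) ≤ 1 := by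
  set F : ℝ → ℝ := fun x => ∫ t in a..x, f t with hF
  set G : ℝ → ℝ := fun x => -Real.exp (-F x) with hG
  have hFmono : MonotoneOn F (Set.uIcc a b) := by
    rw [Set.uIcc_of_le hab]
    intro x hx y hy hxy
    have hsub : F y - F x = ∫ t in x..y, f t :=
      intervalIntegral.integral_interval_sub_left
        (hf.mono_set (Set.uIcc_subset_uIcc_left (Set.Icc_subset_uIcc hy)))
        (hf.mono_set (Set.uIcc_subset_uIcc_left (Set.Icc_subset_uIcc hx)))
    have : 0 ≤ ∫ t in x..y, f t :=
      intervalIntegral.integral_nonneg hxy fun t ht => hf0 t ⟨hx.1.trans ht.1, ht.2.trans hy.2⟩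
    linarith
  have hGmono : MonotoneOn G (Set.uIcc a b) := fun x hx y hy hxy => by
    simpa [hG] using hFmono hx hy hxy
  have hderiv : ∀ᵐ x, x ∈ Set.uIoc a b → f x * Real.exp (-F x) = deriv G x := by
    filter_upwards [hf.ae_hasDerivAt_integral] with x hx hxab
    have hGx : HasDerivAt G (-(Real.exp (-F x) * -f x)) x :=
      (hx (Set.uIoc_subset_uIcc hxab) a Set.left_mem_uIcc).neg.exp.neg
    rw [hGx.deriv]
    ring
  have hmem := hGmono.intervalIntegral_deriv_mem_uIcc
  rw [Set.uIcc_of_le (sub_nonneg.2 (hGmono Set.left_mem_uIcc Set.right_mem_uIcc hab))] at hmem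
  calc ∫ x in a..b, f x * Real.exp (-F x) = ∫ x in a..b, deriv G x :=
        intervalIntegral.integral_congr_ae hderiv
    _ ≤ G b - G a := hmem.2
    _ ≤ 1 := by
        have := Real.exp_pos (-F b)
        simp only [hG, hF, intervalIntegral.integral_same, neg_zero, Real.exp_zero]
        linarith

end Hazard

theorem sum_range_sum_Icc_mul_integral {ts : ℕ → ℝ} {q : ℕ} {g : ℕ → ℝ → ℝ} (c : ℕ → ℝ)
    (hg : ∀ i ≤ q, ∀ m < i, IntervalIntegrable (g i) volume (ts m) (ts (m + 1))) :
    ∑ m ∈ range q, ∑ i ∈ Icc (m + 1) q, c i * ∫ s in ts m..ts (m + 1), g i s =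
      ∑ i ∈ Icc 1 q, c i * ∫ s in ts 0..ts i, g i s := by
  rw [sum_comm' (t' := Icc 1 q) (s' := fun i => range i) (by simp only [mem_range, mem_Icc]; omega)]
  refine sum_congr rfl fun i hi => ?_
  rw [← mul_sum, intervalIntegral.sum_integral_adjacent_intervals (hg i (mem_Icc.1 hi).2)]

section FilterUpdate

variable {q d : ℕ} {ts : ℕ → ℝ} {lam : ℕ → ℝ → ℝ} {Q : ℕ → ℕ → ℝ → ℝ}
  {fW : (Fin d → ℝ) → ℝ} {phi : ℕ → Fin d → ℝ} {m : ℕ} {s : ℝ}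

theorem eq_of_mem_Ioo_ts (hts : MonotoneOn ts (Set.Iic q)) {m' : ℕ} (hm : m < q) (hm' : m' < q)
    (hs : s ∈ Set.Ioo (ts m) (ts (m + 1))) (hs' : s ∈ Set.Ioo (ts m') (ts (m' + 1))) :
    m = m' := by
  by_contra hne
  rcases Nat.lt_or_gt_of_ne hne with h | h
  · linarith [hs.2, hs'.1, hts (Set.mem_Iic.2 hm) (Set.mem_Iic.2 hm'.le) h]
  · linarith [hs.1, hs'.2, hts (Set.mem_Iic.2 hm') (Set.mem_Iic.2 hm.le) h]

theorem Psi_eq_normalizeOr (hts : MonotoneOn ts (Set.Iic q)) (hm : m < q)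
    (hs : s ∈ Set.Ioo (ts m) (ts (m + 1))) (hsk : ∀ k ∈ Icc 1 q, s ≠ ts k)
    (r : ℕ → ℝ) (y : Fin d → ℝ) :
    Psi q d ts lam Q fW phi r y s =
      normalizeOr (Icc 1 q) (psiNum q d ts lam Q fW phi m r y s) r := by
  have hinf : sInf {m' | m' < q ∧ ts m' < s ∧ s < ts (m' + 1)} = m := by
    have hunique : {m' | m' < q ∧ ts m' < s ∧ s < ts (m' + 1)} = {m} :=
      Set.eq_singleton_iff_unique_mem.2
        ⟨⟨hm, hs⟩, fun m' hm' => (eq_of_mem_Ioo_ts hts hm hm'.1 hs hm'.2).symm⟩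
    rw [hunique, csInf_singleton]
  unfold Psi
  rw [if_neg (by rintro ⟨k, hk1, hkq, rfl⟩; exact hsk k (mem_Icc.2 ⟨hk1, hkq⟩) rfl),
    if_pos ⟨m, hm, hs⟩]
  simp only [hinf]
  rfl

section Pointwise

variable (hlam : ∀ i, 0 ≤ lam i s) (hQ : ∀ i j, 0 ≤ Q i j s) (hfW : ∀ y, 0 ≤ fW y)
include hlam hQ hfW

theorem psiNum_nonneg {r : ℕ → ℝ} (hr : ∀ i ∈ Icc 1 q, 0 ≤ r i) (y : Fin d → ℝ) (j : ℕ) :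
    0 ≤ psiNum q d ts lam Q fW phi m r y s j := by
  refine sum_nonneg fun i hi => ?_
  have hri : 0 ≤ r i := hr i (mem_Icc.2 ⟨by have := (mem_Icc.1 hi).1; omega, (mem_Icc.1 hi).2⟩)
  exact mul_nonneg (mul_nonneg (mul_nonneg (mul_nonneg hri (hlam i)) (Real.exp_pos _).le)
    (hQ i j)) (hfW _)

theorem psiBar_nonneg {r : ℕ → ℝ} (hr : ∀ i ∈ Icc 1 q, 0 ≤ r i) (y : Fin d → ℝ) :
    0 ≤ psiBar q d ts lam Q fW phi m r y s :=
  sum_nonneg fun k _ => psiNum_nonneg hlam hQ hfW hr y k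

theorem sum_abs_psiNum_sub_le (p p' : ℕ → ℝ) (y : Fin d → ℝ) :
    ∑ j ∈ Icc 1 q, |psiNum q d ts lam Q fW phi m p y s j - psiNum q d ts lam Q fW phi m p' y s j|
      ≤ psiBar q d ts lam Q fW phi m (fun i => |p i - p' i|) y s := by
  refine sum_le_sum fun j _ => ?_
  simp only [psiNum, ← sum_sub_distrib]
  refine (abs_sum_le_sum_abs _ _).trans_eq (sum_congr rfl fun i _ => ?_)
  rw [← sub_mul, ← sub_mul, ← sub_mul, ← sub_mul, abs_mul, abs_mul, abs_mul, abs_mul,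
    abs_of_nonneg (hlam i), abs_of_nonneg (Real.exp_pos _).le, abs_of_nonneg (hQ i j),
    abs_of_nonneg (hfW _)]

end Pointwise

theorem integrable_psiNum (hfW : Integrable fW) (r : ℕ → ℝ) (k : ℕ) :
    Integrable (fun y => psiNum q d ts lam Q fW phi m r y s k) :=
  integrable_finsetSum _ fun _ _ => (hfW.comp_sub_right (phi k)).const_mul _

theorem integrable_psiBar (hfW : Integrable fW) (r : ℕ → ℝ) :
    Integrable (fun y => psiBar q d ts lam Q fW phi m r y s) :=
  integrable_finsetSum _ fun k _ => integrable_psiNum hfW r k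

theorem integral_psiBar (hfW_int : ∫ y, fW y = 1) (hQ_sum : ∀ i, ∑ j ∈ Icc 1 q, Q i j s = 1)
    (r : ℕ → ℝ) :
    ∫ y, psiBar q d ts lam Q fW phi m r y s =
      ∑ i ∈ Icc (m + 1) q, r i * (lam i s * Real.exp (-Lam lam i s)) := by
  have hfW : Integrable fW := Integrable.of_integral_ne_zero (by rw [hfW_int]; exact one_ne_zero)
  have hterm : ∀ k, ∫ y, psiNum q d ts lam Q fW phi m r y s k =
      ∑ i ∈ Icc (m + 1) q, r i * lam i s * Real.exp (-Lam lam i s) * Q i k s := by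
    intro k
    unfold psiNum
    rw [integral_finsetSum _ fun _ _ => (hfW.comp_sub_right (phi k)).const_mul _]
    refine sum_congr rfl fun i _ => ?_
    rw [integral_const_mul, integral_sub_right_eq_self fW (phi k), hfW_int, mul_one]
  unfold psiBar
  rw [integral_finsetSum _ fun k _ => integrable_psiNum hfW r k]
  simp only [hterm]
  rw [sum_comm]
  refine sum_congr rfl fun i _ => ?_
  rw [← mul_sum, hQ_sum i]
  ring

theorem integral_l1_Psi_mul_psiBar_le (hts : MonotoneOn ts (Set.Iic q)) (hm : m < q)
    (hs : s ∈ Set.Ioo (ts m) (ts (m + 1))) (hsk : ∀ k ∈ Icc 1 q, s ≠ ts k)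
    (hlam : ∀ i, 0 ≤ lam i s) (hQ : ∀ i j, 0 ≤ Q i j s) (hQ_sum : ∀ i, ∑ j ∈ Icc 1 q, Q i j s = 1)
    (hfW : ∀ y, 0 ≤ fW y) (hfW_int : ∫ y, fW y = 1) {p p' : ℕ → ℝ}
    (hp : ∀ i ∈ Icc 1 q, 0 ≤ p i) (hp' : mem1 q p') :
    ∫ y, l1 q (Psi q d ts lam Q fW phi p y s) (Psi q d ts lam Q fW phi p' y s) *
        psiBar q d ts lam Q fW phi m p y s ≤
      2 * ∑ i ∈ Icc (m + 1) q, |p i - p' i| * (lam i s * Real.exp (-Lam lam i s)) := by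
  have hfWi : Integrable fW := Integrable.of_integral_ne_zero (by rw [hfW_int]; exact one_ne_zero)
  have hpt : ∀ y, l1 q (Psi q d ts lam Q fW phi p y s) (Psi q d ts lam Q fW phi p' y s) *
      psiBar q d ts lam Q fW phi m p y s ≤
        2 * psiBar q d ts lam Q fW phi m (fun i => |p i - p' i|) y s := by
    intro y
    rw [Psi_eq_normalizeOr hts hm hs hsk, Psi_eq_normalizeOr hts hm hs hsk]
    exact (sum_abs_sub_normalizeOr_mul_le (fun j _ => psiNum_nonneg hlam hQ hfW hp y j)
      (fun j _ => psiNum_nonneg hlam hQ hfW hp'.1 y j) hp'.1 hp'.2).trans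
      (mul_le_mul_of_nonneg_left (sum_abs_psiNum_sub_le hlam hQ hfW p p' y) zero_le_two)
  calc _ ≤ ∫ y, 2 * psiBar q d ts lam Q fW phi m (fun i => |p i - p' i|) y s :=
        integral_mono_of_nonneg
          (ae_of_all _ fun y => mul_nonneg (sum_nonneg fun _ _ => abs_nonneg _)
            (psiBar_nonneg hlam hQ hfW hp y))
          ((integrable_psiBar hfWi _).const_mul 2) (ae_of_all _ hpt)
    _ = _ := by rw [integral_const_mul, integral_psiBar hfW_int hQ_sum]

theorem intervalIntegral_integral_l1_Psi_mul_psiBar_le (hts : MonotoneOn ts (Set.Iic q))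
    (hm : m < q) (htm : 0 ≤ ts m) (hlam : ∀ i s, 0 ≤ s → 0 ≤ lam i s)
    (hQ : ∀ i j s, 0 ≤ s → 0 ≤ Q i j s) (hQ_sum : ∀ i s, 0 ≤ s → ∑ j ∈ Icc 1 q, Q i j s = 1)
    (hfW : ∀ y, 0 ≤ fW y) (hfW_int : ∫ y, fW y = 1)
    (hint : ∀ i ∈ Icc (m + 1) q, IntervalIntegrable (fun s => lam i s * Real.exp (-Lam lam i s))
      volume (ts m) (ts (m + 1)))
    {p p' : ℕ → ℝ} (hp : ∀ i ∈ Icc 1 q, 0 ≤ p i) (hp' : mem1 q p') :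
    ∫ s in ts m..ts (m + 1), ∫ y,
        l1 q (Psi q d ts lam Q fW phi p y s) (Psi q d ts lam Q fW phi p' y s) *
          psiBar q d ts lam Q fW phi m p y s ≤
      2 * ∑ i ∈ Icc (m + 1) q,
        |p i - p' i| * ∫ s in ts m..ts (m + 1), lam i s * Real.exp (-Lam lam i s) := by
  have hle : ts m ≤ ts (m + 1) :=
    hts (Set.mem_Iic.2 hm.le) (Set.mem_Iic.2 hm) (Nat.le_succ m)
  -- the exit times `ts k` form a null set, off which `Psi` is the normalized `psiNum`
  have hgrid : ∀ᵐ s, s ∉ ((Icc 1 q).image ts : Set ℝ) := (Finset.countable_toSet _).ae_notMem _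
  have hbound : ∀ᵐ s ∂volume.restrict (Set.Ioc (ts m) (ts (m + 1))),
      ∫ y, l1 q (Psi q d ts lam Q fW phi p y s) (Psi q d ts lam Q fW phi p' y s) *
          psiBar q d ts lam Q fW phi m p y s ≤
        2 * ∑ i ∈ Icc (m + 1) q, |p i - p' i| * (lam i s * Real.exp (-Lam lam i s)) := by
    filter_upwards [ae_restrict_mem measurableSet_Ioc, ae_restrict_of_ae hgrid] with s hs hsgrid
    have hsk : ∀ k ∈ Icc 1 q, s ≠ ts k := fun k hk h =>
      hsgrid (by rw [coe_image]; exact ⟨k, hk, h.symm⟩)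
    have hs' : s ∈ Set.Ioo (ts m) (ts (m + 1)) :=
      ⟨hs.1, hs.2.lt_of_ne (hsk (m + 1) (mem_Icc.2 ⟨by omega, hm⟩))⟩
    have hs0 : 0 ≤ s := htm.trans hs.1.le
    exact integral_l1_Psi_mul_psiBar_le hts hm hs' hsk (fun i => hlam i s hs0)
      (fun i j => hQ i j s hs0) (fun i => hQ_sum i s hs0) hfW hfW_int hp hp'
  have hnonneg : ∀ᵐ s ∂volume.restrict (Set.Ioc (ts m) (ts (m + 1))),
      0 ≤ ∫ y, l1 q (Psi q d ts lam Q fW phi p y s) (Psi q d ts lam Q fW phi p' y s) *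
          psiBar q d ts lam Q fW phi m p y s := by
    filter_upwards [ae_restrict_mem measurableSet_Ioc] with s hs
    have hs0 : 0 ≤ s := htm.trans hs.1.le
    exact integral_nonneg fun y => mul_nonneg (sum_nonneg fun _ _ => abs_nonneg _)
      (psiBar_nonneg (fun i => hlam i s hs0) (fun i j => hQ i j s hs0) hfW hp y)
  calc _ ≤ ∫ s in ts m..ts (m + 1),
        2 * ∑ i ∈ Icc (m + 1) q, |p i - p' i| * (lam i s * Real.exp (-Lam lam i s)) := by
        rw [intervalIntegral.integral_of_le hle, intervalIntegral.integral_of_le hle]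
        exact integral_mono_of_nonneg hnonneg
          ((integrable_finsetSum _ fun i hi => (hint i hi).1.const_mul _).const_mul 2) hbound
    _ = _ := by
        rw [intervalIntegral.integral_const_mul,
          intervalIntegral.integral_finsetSum fun i hi => (hint i hi).const_mul _]
        simp only [intervalIntegral.integral_const_mul]

end FilterUpdate

theorem filter_stability_general
    (q d : ℕ)
    (ts : ℕ → ℝ) (hts0 : ts 0 = 0)
    (htsmono : ∀ i, i < q → ts i ≤ ts (i + 1))
    (Clam : ℝ)
    (lam : ℕ → ℝ → ℝ) (hlam_meas : ∀ i, Measurable (lam i))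
    (hlam_bd : ∀ i s, 0 ≤ s → lam i s ∈ Set.Icc 0 Clam)
    (Q : ℕ → ℕ → ℝ → ℝ)
    (hQ_bd : ∀ i j s, 0 ≤ s → Q i j s ∈ Set.Icc (0:ℝ) 1)
    (hQ_sum : ∀ i s, 0 ≤ s → ∑ j ∈ Finset.Icc 1 q, Q i j s = 1)
    (fW : (Fin d → ℝ) → ℝ)
    (hfW_nonneg : ∀ y, 0 ≤ fW y) (hfW_int : ∫ y : Fin d → ℝ, fW y = 1)
    (phi : ℕ → Fin d → ℝ)
    (p p' : ℕ → ℝ) (hp : mem1 q p) (hp' : mem1 q p') :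
    ∑ m ∈ Finset.range q,
        ∫ s in (ts m)..(ts (m + 1)),
          ∫ y : Fin d → ℝ,
            l1 q (Psi q d ts lam Q fW phi p y s) (Psi q d ts lam Q fW phi p' y s) *
              psiBar q d ts lam Q fW phi m p y s
      ≤ 2 * l1 q p p' := by
  have hts : MonotoneOn ts (Set.Iic q) :=
    monotoneOn_of_le_succ (s := Set.Iic q) inferInstance fun k _ _ hk =>
      htsmono k (Order.succ_le_iff.1 hk)
  have hts_nonneg : ∀ k ≤ q, 0 ≤ ts k := fun k hk =>
    hts0 ▸ hts (Set.mem_Iic.2 (Nat.zero_le q)) (Set.mem_Iic.2 hk) (Nat.zero_le k)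
  have hts_mem : ∀ i ≤ q, ∀ k ≤ i, ts k ∈ Set.uIcc 0 (ts i) := fun i hi k hk =>
    Set.mem_uIcc_of_le (hts_nonneg k (hk.trans hi)) (hts (Set.mem_Iic.2 (hk.trans hi)) hi hk)
  have hlam_int : ∀ i ≤ q, IntervalIntegrable (lam i) volume 0 (ts i) := fun i hi =>
    (hlam_meas i).intervalIntegrable_of_norm_le (hts_nonneg i hi) fun s hs => by
      rw [Real.norm_eq_abs, abs_of_nonneg (hlam_bd i s hs.1.le).1]
      exact (hlam_bd i s hs.1.le).2
  have hint : ∀ i ≤ q, ∀ m < i, IntervalIntegrable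
      (fun s => lam i s * Real.exp (-Lam lam i s)) volume (ts m) (ts (m + 1)) := fun i hi m hmi =>
    (hlam_int i hi).mul_exp_neg_integral.mono_set
      (Set.uIcc_subset_uIcc (hts_mem i hi m hmi.le) (hts_mem i hi (m + 1) hmi))
  calc _ ≤ ∑ m ∈ range q, 2 * ∑ i ∈ Icc (m + 1) q,
        |p i - p' i| * ∫ s in ts m..ts (m + 1), lam i s * Real.exp (-Lam lam i s) :=
        sum_le_sum fun m hm => intervalIntegral_integral_l1_Psi_mul_psiBar_le hts
          (mem_range.1 hm) (hts_nonneg m (mem_range.1 hm).le) (fun i s hs => (hlam_bd i s hs).1)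
          (fun i j s hs => (hQ_bd i j s hs).1) hQ_sum hfW_nonneg hfW_int
          (fun i hi => hint i (mem_Icc.1 hi).2 m (by have := (mem_Icc.1 hi).1; omega)) hp.1 hp'
    _ = 2 * ∑ i ∈ Icc 1 q,
        |p i - p' i| * ∫ s in (0 : ℝ)..ts i, lam i s * Real.exp (-Lam lam i s) := by
        rw [← mul_sum, sum_range_sum_Icc_mul_integral _ hint, hts0]
    _ ≤ 2 * l1 q p p' := by
        refine mul_le_mul_of_nonneg_left (sum_le_sum fun i hi => ?_) zero_le_two
        exact mul_le_of_le_one_right (abs_nonneg _)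
          (integral_mul_exp_neg_integral_le_one (hts_nonneg i (mem_Icc.1 hi).2)
            (hlam_int i (mem_Icc.1 hi).2) fun s hs => (hlam_bd i s hs.1).1)

/-- **Lemma C.4 (filter stability).** -/
theorem filter_stability
    (q d : ℕ) (hq : 1 ≤ q) (hd : 1 ≤ d)
    (ts : ℕ → ℝ) (hts0 : ts 0 = 0) (hts1 : 0 < ts 1)
    (htsmono : ∀ i, i < q → ts i ≤ ts (i + 1))
    (Clam : ℝ) (hClam : 0 ≤ Clam)
    (lam : ℕ → ℝ → ℝ) (hlam_meas : ∀ i, Measurable (lam i))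
    (hlam_bd : ∀ i s, 0 ≤ s → lam i s ∈ Set.Icc 0 Clam)
    (Q : ℕ → ℕ → ℝ → ℝ) (hQ_meas : ∀ i j, Measurable (Q i j))
    (hQ_bd : ∀ i j s, 0 ≤ s → Q i j s ∈ Set.Icc (0:ℝ) 1)
    (hQ_sum : ∀ i s, 0 ≤ s → ∑ j ∈ Finset.Icc 1 q, Q i j s = 1)
    (fW : (Fin d → ℝ) → ℝ) (hfW_meas : Measurable fW)
    (hfW_nonneg : ∀ y, 0 ≤ fW y) (hfW_int : ∫ y : Fin d → ℝ, fW y = 1)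
    (phi : ℕ → Fin d → ℝ)
    (p p' : ℕ → ℝ) (hp : mem1 q p) (hp' : mem1 q p') :
    ∑ m ∈ Finset.range q,
        ∫ s in (ts m)..(ts (m + 1)),
          ∫ y : Fin d → ℝ,
            l1 q (Psi q d ts lam Q fW phi p y s) (Psi q d ts lam Q fW phi p' y s) *
              psiBar q d ts lam Q fW phi m p y s
      ≤ 2 * l1 q p p' :=
  filter_stability_general q d ts hts0 htsmono Clam lam hlam_meas hlam_bd Q hQ_bd hQ_sum fW
    hfW_nonneg hfW_int phi p p' hp hp'

end PDMP
end
end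

section
/- (Proposition C.3, Lipschitz continuity of H^m.) For every m ∈ M = {m ∈ {0,…,q−1} : t*_m < t*_{m+1}}, all π, π̃ ∈ M_1 and all u, ũ ≥ 0, one has |H^m g(π,u) − H^m g(π̃,ũ)| ≤ C_g |π − π̃| + ([g]_2 + C_g C_λ)|u − ũ|. -/
open MeasureTheory Finset

noncomputable section

namespace PDMP

private lemma exp_neg_lip' (a b : ℝ) (hb : 0 ≤ b) (hab : b ≤ a) :
    |Real.exp (-a) - Real.exp (-b)| ≤ |a - b| := by
  have h1 : (-(a - b)) + 1 ≤ Real.exp (-(a - b)) := Real.add_one_le_exp _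
  have h2 : Real.exp (-b) ≤ 1 := Real.exp_le_one_iff.mpr (by linarith)
  have h3 : Real.exp (-a) = Real.exp (-b) * Real.exp (-(a - b)) := by
    rw [← Real.exp_add]; ring_nf
  have h4 : Real.exp (-a) ≤ Real.exp (-b) := Real.exp_le_exp.mpr (by linarith)
  have h5 : (0:ℝ) < Real.exp (-b) := Real.exp_pos _
  rw [abs_of_nonpos (by linarith), abs_of_nonneg (by linarith)]
  nlinarith

private lemma exp_neg_lip (a b : ℝ) (ha : 0 ≤ a) (hb : 0 ≤ b) :
    |Real.exp (-a) - Real.exp (-b)| ≤ |a - b| := by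
  rcases le_total b a with h | h
  · exact exp_neg_lip' a b hb h
  · rw [abs_sub_comm, abs_sub_comm a b]; exact exp_neg_lip' b a ha h

private lemma lam_intInt (Clam : ℝ) (f : ℝ → ℝ) (hf : Measurable f)
    (hbd : ∀ s, 0 ≤ s → f s ∈ Set.Icc 0 Clam) (a b : ℝ) (ha : 0 ≤ a) (hb : 0 ≤ b) :
    IntervalIntegrable f volume a b := by
  rw [intervalIntegrable_iff]
  apply MeasureTheory.Measure.integrableOn_of_bounded (M := Clam)
  · exact ne_of_lt (measure_Ioc_lt_top (μ := volume))
  · exact hf.aestronglyMeasurable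
  · refine (ae_restrict_iff' measurableSet_uIoc).mpr ?_
    refine Filter.Eventually.of_forall fun x hx => ?_
    have hx1 : min a b < x := hx.1
    have hx0 : (0:ℝ) ≤ x := le_of_lt (lt_of_le_of_lt (le_min ha hb) hx1)
    have h := hbd x hx0
    rw [Real.norm_eq_abs, abs_of_nonneg h.1]; exact h.2

private lemma Lam_lip (Clam : ℝ) (f : ℝ → ℝ) (hf : Measurable f)
    (hbd : ∀ s, 0 ≤ s → f s ∈ Set.Icc 0 Clam) (a b : ℝ) (ha : 0 ≤ a) (hb : 0 ≤ b) :
    |(∫ s in (0:ℝ)..a, f s) - ∫ s in (0:ℝ)..b, f s| ≤ Clam * |a - b| := by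
  have h1 : IntervalIntegrable f volume 0 a := lam_intInt Clam f hf hbd 0 a le_rfl ha
  have h2 : IntervalIntegrable f volume 0 b := lam_intInt Clam f hf hbd 0 b le_rfl hb
  rw [intervalIntegral.integral_interval_sub_left h1 h2]
  have := intervalIntegral.norm_integral_le_of_norm_le_const (C := Clam) (f := f)
    (a := b) (b := a) ?_
  · rwa [Real.norm_eq_abs] at this
  · intro x hx
    have hx1 : min b a < x := hx.1
    have hx0 : (0:ℝ) ≤ x := le_of_lt (lt_of_le_of_lt (le_min hb ha) hx1)
    have h := hbd x hx0
    rw [Real.norm_eq_abs, abs_of_nonneg h.1]; exact h.2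

private lemma Lam_nonneg (Clam : ℝ) (f : ℝ → ℝ)
    (hbd : ∀ s, 0 ≤ s → f s ∈ Set.Icc 0 Clam) (a : ℝ) (ha : 0 ≤ a) :
    0 ≤ ∫ s in (0:ℝ)..a, f s := by
  apply intervalIntegral.integral_nonneg ha
  intro x hx
  exact (hbd x hx.1).1

/-- **Proposition C.3 (Lipschitz continuity of `H^m`).** -/
theorem Hm_lipschitz
    (q d : ℕ) (hq : 1 ≤ q) (hd : 1 ≤ d)
    (ts : ℕ → ℝ) (hts0 : ts 0 = 0) (hts1 : 0 < ts 1)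
    (htsmono : ∀ i, i < q → ts i ≤ ts (i + 1))
    (Clam : ℝ) (hClam : 0 ≤ Clam)
    (lam : ℕ → ℝ → ℝ) (hlam_meas : ∀ i, Measurable (lam i))
    (hlam_bd : ∀ i s, 0 ≤ s → lam i s ∈ Set.Icc 0 Clam)
    (Q : ℕ → ℕ → ℝ → ℝ) (hQ_meas : ∀ i j, Measurable (Q i j))
    (hQ_bd : ∀ i j s, 0 ≤ s → Q i j s ∈ Set.Icc (0:ℝ) 1)
    (hQ_sum : ∀ i s, 0 ≤ s → ∑ j ∈ Finset.Icc 1 q, Q i j s = 1)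
    (fW : (Fin d → ℝ) → ℝ) (hfW_meas : Measurable fW)
    (hfW_nonneg : ∀ y, 0 ≤ fW y) (hfW_int : ∫ y : Fin d → ℝ, fW y = 1)
    (phi : ℕ → Fin d → ℝ)
    (g : ℕ → ℝ → ℝ) (hg_meas : ∀ i, Measurable (g i))
    (Cg g2 : ℝ) (hCg : 0 ≤ Cg) (hg2 : 0 ≤ g2)
    (hg_bd : ∀ i ∈ Finset.Icc 1 q, ∀ t, 0 ≤ t → |g i t| ≤ Cg)
    (hg_lip : ∀ i ∈ Finset.Icc 1 q, ∀ t u, t ∈ Set.Icc 0 (ts i) → u ∈ Set.Icc 0 (ts i) →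
      |g i t - g i u| ≤ g2 * |t - u|)
    (m : ℕ) (hm : m < q) (hmM : ts m < ts (m + 1))
    (p p' : ℕ → ℝ) (hp : mem1 q p) (hp' : mem1 q p')
    (u u' : ℝ) (hu : 0 ≤ u) (hu' : 0 ≤ u') :
    |Hm q ts lam m g p u - Hm q ts lam m g p' u'| ≤
      Cg * l1 q p p' + (g2 + Cg * Clam) * |u - u'| := by
  -- monotonicity of ts
  have hmono : ∀ i j : ℕ, i ≤ j → j ≤ q → ts i ≤ ts j := by
    intro i j hij hjq
    induction j with
    | zero => simp_all
    | succ k ih =>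
      rcases Nat.eq_or_lt_of_le hij with h | h
      · rw [h]
      · exact le_trans (ih (Nat.lt_succ_iff.mp h) (le_trans (Nat.le_succ k) hjq))
          (htsmono k (Nat.lt_of_succ_le hjq))
  have htsm_nonneg : ∀ i : ℕ, i ≤ q → 0 ≤ ts i := fun i hi =>
    hts0 ▸ hmono 0 i (Nat.zero_le _) hi
  -- clamped times
  set v : ℝ := min (max u (ts m)) (ts (m + 1)) with hvdef
  set v' : ℝ := min (max u' (ts m)) (ts (m + 1)) with hv'def
  -- Hm rewrites as a clamped sum
  have key : ∀ (pp : ℕ → ℝ) (w : ℝ),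
      Hm q ts lam m g pp w = ∑ i ∈ Finset.Icc (m + 1) q,
        pp i * Real.exp (-(Lam lam i (min (max w (ts m)) (ts (m + 1))))) *
          g i (min (max w (ts m)) (ts (m + 1))) := by
    intro pp w
    unfold Hm Hop
    by_cases hw : w < ts m
    · rw [if_pos hw]
      have hmax : max w (ts m) = ts m := max_eq_right hw.le
      have hmin : min (ts m) (ts (m + 1)) = ts m := min_eq_left hmM.le
      rw [hmax, hmin]
      rw [← Finset.sum_subset (Finset.Icc_subset_Icc_left (Nat.one_le_iff_ne_zero.mpr
        (Nat.succ_ne_zero m)))]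
      · apply Finset.sum_congr rfl
        intro i hi
        rw [Finset.mem_Icc] at hi
        have : ts m < ts i := lt_of_lt_of_le hmM (hmono (m + 1) i hi.1 hi.2)
        rw [if_pos this]
      · intro i hi hni
        rw [Finset.mem_Icc] at hi hni
        have him : i ≤ m := by omega
        have : ¬ ts m < ts i := not_lt.mpr (hmono i m him (le_of_lt hm))
        rw [if_neg this]
    · rw [if_neg hw]
      rw [max_eq_left (not_lt.mp hw)]
  rw [key p u, key p' u']
  rw [← hvdef, ← hv'def]
  -- basic facts about v, v'
  have hvmem : ∀ w : ℝ, ts m ≤ min (max w (ts m)) (ts (m + 1)) ∧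
      min (max w (ts m)) (ts (m + 1)) ≤ ts (m + 1) := fun w =>
    ⟨le_min (le_max_right _ _) hmM.le, min_le_right _ _⟩
  have hv1 : ts m ≤ v := (hvmem u).1
  have hv2 : v ≤ ts (m + 1) := (hvmem u).2
  have hv'1 : ts m ≤ v' := (hvmem u').1
  have hv'2 : v' ≤ ts (m + 1) := (hvmem u').2
  have hv0 : 0 ≤ v := le_trans (htsm_nonneg m hm.le) hv1
  have hv'0 : 0 ≤ v' := le_trans (htsm_nonneg m hm.le) hv'1
  have hvv' : |v - v'| ≤ |u - u'| := by
    calc |v - v'| ≤ max |max u (ts m) - max u' (ts m)| |ts (m+1) - ts (m+1)| :=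
          abs_min_sub_min_le_max _ _ _ _
      _ = |max u (ts m) - max u' (ts m)| := by simp
      _ ≤ max |u - u'| |ts m - ts m| := abs_max_sub_max_le_max _ _ _ _
      _ = |u - u'| := by simp [abs_nonneg]
  -- per-index bounds
  have hsub : Finset.Icc (m + 1) q ⊆ Finset.Icc 1 q :=
    Finset.Icc_subset_Icc_left (Nat.one_le_iff_ne_zero.mpr (Nat.succ_ne_zero m))
  have hexp_le_one : ∀ (i : ℕ) (t : ℝ), 0 ≤ t → Real.exp (-(Lam lam i t)) ≤ 1 := by
    intro i t ht
    apply Real.exp_le_one_iff.mpr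
    simp only [neg_nonpos]
    exact Lam_nonneg Clam (lam i) (fun s hs => hlam_bd i s hs) t ht
  -- triangle inequality split
  have tri : |(∑ i ∈ Finset.Icc (m+1) q, p i * Real.exp (-(Lam lam i v)) * g i v) -
      ∑ i ∈ Finset.Icc (m+1) q, p' i * Real.exp (-(Lam lam i v')) * g i v'| ≤
      |(∑ i ∈ Finset.Icc (m+1) q, p i * Real.exp (-(Lam lam i v)) * g i v) -
        ∑ i ∈ Finset.Icc (m+1) q, p' i * Real.exp (-(Lam lam i v)) * g i v| +
      |(∑ i ∈ Finset.Icc (m+1) q, p' i * Real.exp (-(Lam lam i v)) * g i v) -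
        ∑ i ∈ Finset.Icc (m+1) q, p' i * Real.exp (-(Lam lam i v')) * g i v'| :=
    abs_sub_le _ _ _
  refine le_trans tri (add_le_add ?_ ?_)
  · -- first term: ≤ Cg * l1
    rw [← Finset.sum_sub_distrib]
    refine le_trans (Finset.abs_sum_le_sum_abs _ _) ?_
    have step : ∀ i ∈ Finset.Icc (m+1) q,
        |p i * Real.exp (-(Lam lam i v)) * g i v - p' i * Real.exp (-(Lam lam i v)) * g i v|
          ≤ Cg * |p i - p' i| := by
      intro i hi
      have h1 : p i * Real.exp (-(Lam lam i v)) * g i v -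
          p' i * Real.exp (-(Lam lam i v)) * g i v =
          (p i - p' i) * (Real.exp (-(Lam lam i v)) * g i v) := by ring
      rw [h1, abs_mul]
      have h2 : |Real.exp (-(Lam lam i v)) * g i v| ≤ Cg := by
        rw [abs_mul, abs_of_nonneg (Real.exp_nonneg _)]
        calc Real.exp (-(Lam lam i v)) * |g i v| ≤ 1 * Cg := by
              apply mul_le_mul (hexp_le_one i v hv0) (hg_bd i (hsub hi) v hv0)
                (abs_nonneg _) zero_le_one
          _ = Cg := one_mul Cg
      calc |p i - p' i| * |Real.exp (-(Lam lam i v)) * g i v| ≤ |p i - p' i| * Cg :=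
            mul_le_mul_of_nonneg_left h2 (abs_nonneg _)
        _ = Cg * |p i - p' i| := mul_comm _ _
    refine le_trans (Finset.sum_le_sum step) ?_
    rw [← Finset.mul_sum]
    apply mul_le_mul_of_nonneg_left _ hCg
    exact Finset.sum_le_sum_of_subset_of_nonneg hsub (fun i _ _ => abs_nonneg _)
  · -- second term: ≤ (g2 + Cg*Clam) * |u - u'|
    rw [← Finset.sum_sub_distrib]
    refine le_trans (Finset.abs_sum_le_sum_abs _ _) ?_
    have step : ∀ i ∈ Finset.Icc (m+1) q,
        |p' i * Real.exp (-(Lam lam i v)) * g i v - p' i * Real.exp (-(Lam lam i v')) * g i v'|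
          ≤ p' i * ((g2 + Cg * Clam) * |v - v'|) := by
      intro i hi
      rw [Finset.mem_Icc] at hi
      have hiq : i ∈ Finset.Icc 1 q := Finset.mem_Icc.mpr ⟨by omega, hi.2⟩
      have hts_i : ts (m + 1) ≤ ts i := hmono (m + 1) i hi.1 hi.2
      have hp'i : 0 ≤ p' i := hp'.1 i hiq
      have h1 : p' i * Real.exp (-(Lam lam i v)) * g i v -
          p' i * Real.exp (-(Lam lam i v')) * g i v' =
          p' i * (Real.exp (-(Lam lam i v)) * g i v - Real.exp (-(Lam lam i v')) * g i v') := by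
        ring
      rw [h1, abs_mul, abs_of_nonneg hp'i]
      apply mul_le_mul_of_nonneg_left _ hp'i
      -- core estimate
      have hsplit : Real.exp (-(Lam lam i v)) * g i v - Real.exp (-(Lam lam i v')) * g i v' =
          Real.exp (-(Lam lam i v)) * (g i v - g i v') +
          g i v' * (Real.exp (-(Lam lam i v)) - Real.exp (-(Lam lam i v'))) := by ring
      rw [hsplit]
      refine le_trans (abs_add_le _ _) ?_
      have hA : |Real.exp (-(Lam lam i v)) * (g i v - g i v')| ≤ g2 * |v - v'| := by
        rw [abs_mul, abs_of_nonneg (Real.exp_nonneg _)]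
        calc Real.exp (-(Lam lam i v)) * |g i v - g i v'| ≤ 1 * (g2 * |v - v'|) := by
              apply mul_le_mul (hexp_le_one i v hv0)
                (hg_lip i hiq v v' ⟨hv0, hv2.trans hts_i⟩ ⟨hv'0, hv'2.trans hts_i⟩)
                (abs_nonneg _) zero_le_one
          _ = g2 * |v - v'| := one_mul _
      have hB : |g i v' * (Real.exp (-(Lam lam i v)) - Real.exp (-(Lam lam i v')))| ≤
          Cg * (Clam * |v - v'|) := by
        rw [abs_mul]
        apply mul_le_mul (hg_bd i hiq v' hv'0)
        · refine le_trans (exp_neg_lip _ _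
            (Lam_nonneg Clam (lam i) (fun s hs => hlam_bd i s hs) v hv0)
            (Lam_nonneg Clam (lam i) (fun s hs => hlam_bd i s hs) v' hv'0)) ?_
          exact Lam_lip Clam (lam i) (hlam_meas i) (fun s hs => hlam_bd i s hs) v v' hv0 hv'0
        · exact abs_nonneg _
        · exact hCg
      calc |Real.exp (-(Lam lam i v)) * (g i v - g i v')| +
            |g i v' * (Real.exp (-(Lam lam i v)) - Real.exp (-(Lam lam i v')))| ≤
            g2 * |v - v'| + Cg * (Clam * |v - v'|) := add_le_add hA hB
        _ = (g2 + Cg * Clam) * |v - v'| := by ring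
    refine le_trans (Finset.sum_le_sum step) ?_
    rw [← Finset.sum_mul]
    have hsum : ∑ i ∈ Finset.Icc (m+1) q, p' i ≤ 1 := by
      rw [← hp'.2]
      exact Finset.sum_le_sum_of_subset_of_nonneg hsub (fun i hiq _ => hp'.1 i hiq)
    have hC : 0 ≤ (g2 + Cg * Clam) := by positivity
    calc (∑ i ∈ Finset.Icc (m+1) q, p' i) * ((g2 + Cg * Clam) * |v - v'|) ≤
          1 * ((g2 + Cg * Clam) * |v - v'|) :=
          mul_le_mul_of_nonneg_right hsum (by positivity)
      _ = (g2 + Cg * Clam) * |v - v'| := one_mul _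
      _ ≤ (g2 + Cg * Clam) * |u - u'| := mul_le_mul_of_nonneg_left hvv' hC

end PDMP
end
end
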